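/- For any fixed k ≥ 3 and any n ≥ 2k+2, the cardinality of 𝒱^(k)(n) equals (S^(k−1)(n − 2k − 1) − 1 + δ_n^(k)) / 2, where δ_n^(k) = 1 if k divides n and δ_n^(k) = 0 otherwise. -/

import Mathlib

/-!
Binary strings are modeled as `List Bool`, with `true` = 1 and `false` = 0.
-/

/-- A string `v` is bifix-free if no nonempty proper prefix of `v` equals a
(proper) suffix of `v`. -/
def BifixFree (v : List Bool) : Prop :=
  ∀ p : List Bool, p ≠ [] → p ≠ v → p <+: v → ¬ p <:+ v

/-- The set `V_n^(k)`: binary strings of length `n` starting with `k` ones,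
ending with `k` zeros, whose middle factor `v_{k+1} … v_{n-k}` begins with 0,
ends with 1, and contains neither `k` consecutive 0's nor `k` consecutive 1's. -/
def Vnk (n k : ℕ) : Set (List Bool) :=
  {v | v.length = n ∧
    List.replicate k true <+: v ∧
    List.replicate k false <:+ v ∧
    ((v.drop k).take (n - 2 * k)).head? = some false ∧
    ((v.drop k).take (n - 2 * k)).getLast? = some true ∧
    ¬ List.replicate k false <:+: ((v.drop k).take (n - 2 * k)) ∧
    ¬ List.replicate k true <:+: ((v.drop k).take (n - 2 * k))}

/-- `𝒱^(k) = ⋃_{i ≥ 2k+2} V_i^(k)`. -/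
def VkSet (k : ℕ) : Set (List Bool) := ⋃ i ∈ {i : ℕ | 2 * k + 2 ≤ i}, Vnk i k

/-- `𝒱^(k)(n)`: elements of `𝒱^(k)` of length at most `n`. -/
def VkLe (k n : ℕ) : Set (List Bool) := {v ∈ VkSet k | v.length ≤ n}

/-- The set of binary strings of length `ℓ` that begin with 0, end with 1, and
contain neither `k` consecutive 0's nor `k` consecutive 1's. -/
def Rset (k ℓ : ℕ) : Set (List Bool) :=
  {w | w.length = ℓ ∧ w.head? = some false ∧ w.getLast? = some true ∧
    ¬ List.replicate k false <:+: w ∧ ¬ List.replicate k true <:+: w}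

/-- `r_ℓ^(k)`, with the convention `r_0^(k) = 1`. -/
noncomputable def r (k ℓ : ℕ) : ℕ := if ℓ = 0 then 1 else (Rset k ℓ).ncard

/-- Shifted `k`-generalized Fibonacci numbers: `f_ℓ^(k) = 2^ℓ` for `ℓ ≤ k-1`, and
`f_ℓ^(k) = ∑_{i=1}^{k} f_{ℓ-i}^(k)` for `ℓ ≥ k`. -/
def f (k : ℕ) : ℕ → ℕ
  | ℓ =>
    if h : ℓ < k then 2 ^ ℓ
    else ∑ i ∈ (Finset.range k).attach, f k (ℓ - (i.1 + 1))
termination_by ℓ => ℓ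
decreasing_by
  have hi := i.2
  simp only [Finset.mem_range] at hi
  omega

/-- `S^(k)(n) = ∑_{ℓ=0}^{n} f_ℓ^(k)`. -/
def S (k n : ℕ) : ℕ := ∑ ℓ ∈ Finset.range (n + 1), f k ℓ

/-- `d_ℓ^(k)`: 1 if `ℓ ≡ 0 (mod k)`, -1 if `ℓ ≡ 1 (mod k)`, 0 otherwise. -/
def d (k ℓ : ℕ) : ℤ := if ℓ % k = 0 then 1 else if ℓ % k = 1 then -1 else 0

/-- A set of binary strings is a cross-fix-free code if every element is
bifix-free and, for any two distinct elements `v, v'`, no nonempty prefix of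
`v` (including `v` itself) is a suffix of `v'`, and vice versa. -/
def CrossFixFree (X : Set (List Bool)) : Prop :=
  (∀ v ∈ X, BifixFree v) ∧
  ∀ v ∈ X, ∀ v' ∈ X, v ≠ v' → ∀ p : List Bool, p ≠ [] → p <+: v → ¬ p <:+ v'

/-- A strong cross-fix-free code: cross-fix-free and no codeword is a factor of
another. -/
def StrongCrossFixFree (X : Set (List Bool)) : Prop :=
  CrossFixFree X ∧ ∀ v ∈ X, ∀ v' ∈ X, v ≠ v' → ¬ v <:+: v'

/-- A Dyck word: equal numbers of 1's and 0's, and every prefix has at least as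
many 1's as 0's. -/
def IsDyck (w : List Bool) : Prop :=
  w.count true = w.count false ∧ ∀ p : List Bool, p <+: w → p.count false ≤ p.count true

/-- `𝒟 = { 1α0 : α a Dyck word }`. -/
def Dset : Set (List Bool) := {v | ∃ α : List Bool, IsDyck α ∧ v = true :: (α ++ [false])}

/-- `𝒟(n)`: elements of `𝒟` of length at most `n`. -/
def DLe (n : ℕ) : Set (List Bool) := {v ∈ Dset | v.length ≤ n}

/-!
Peeling off the first run of a word whose runs are all shorter than `k` shows that
`r_ℓ` (words from 0 to 1, the empty word counted once) and `b_ℓ` (words from 0 to 0)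
satisfy, via the symmetry 0 ↔ 1, the coupled recurrences `r_ℓ = ∑ b_x` and
`b_ℓ = ∑ r_x` over the window `ℓ - k < x < ℓ`. Hence `r + b` obeys the
`(k-1)`-bonacci recurrence, solved by `f^(k-1)_{ℓ-1}`, and `r - b` obeys
`u_ℓ = -∑ u_x`, solved by `d_ℓ`; so `2 r_ℓ = f^(k-1)_{ℓ-1} + d_ℓ`. A word of
`𝒱^(k)(n)` is `1^k w 0^k` with `w` counted by `r_ℓ` for some `2 ≤ ℓ ≤ n - 2k`,
and summing these identities gives the formula.
-/

open Finset

namespace List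

variable {α : Type*}

theorem exists_eq_replicate_append_head?_ne (a : α) :
    ∀ w : List α, ∃ t u, w = replicate t a ++ u ∧ u.head? ≠ some a
  | [] => ⟨0, [], rfl, by simp⟩
  | x :: w => by
    by_cases hx : x = a
    · obtain ⟨t, u, rfl, hu⟩ := exists_eq_replicate_append_head?_ne a w
      exact ⟨t + 1, u, by simp [hx, replicate_succ], hu⟩
    · exact ⟨0, x :: w, rfl, by simpa using hx⟩

theorem replicate_append_inj {a : α} {s t : ℕ} {u v : List α} (hu : u.head? ≠ some a)
    (hv : v.head? ≠ some a) (h : replicate s a ++ u = replicate t a ++ v) : s = t ∧ u = v := by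
  induction s generalizing t with
  | zero =>
    cases t with
    | zero => simpa using h
    | succ t =>
      simp only [replicate_succ, cons_append, replicate_zero, nil_append] at h
      simp [h] at hu
  | succ s ih =>
    cases t with
    | zero =>
      simp only [replicate_succ, cons_append, replicate_zero, nil_append] at h
      simp [← h] at hv
    | succ t =>
      simp only [replicate_succ, cons_append, cons.injEq, true_and] at h
      exact (ih h).imp_left (congrArg (· + 1))

theorem not_replicate_infix_replicate_append {k t : ℕ} {a c : α} {u : List α} (ht : t < k)
    (hu : u.head? ≠ some a) (hc : ¬ replicate k c <:+: u) :
    ¬ replicate k c <:+: replicate t a ++ u := by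
  induction t with
  | zero => simpa using hc
  | succ t ih =>
    rw [replicate_succ, cons_append, infix_cons_iff, not_or]
    refine ⟨fun hpre => ?_, ih (by omega)⟩
    obtain ⟨j, rfl⟩ : ∃ j, k = t + 1 + (j + 1) := ⟨k - t - 2, by omega⟩
    obtain rfl : c = a := by
      rw [show t + 1 + (j + 1) = (t + 1 + j) + 1 by omega, replicate_succ,
        cons_prefix_cons] at hpre
      exact hpre.1
    rw [replicate_add, ← cons_append, ← replicate_succ, prefix_append_right_inj] at hpre
    obtain ⟨s, rfl⟩ := hpre
    simp [replicate_succ] at hu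

end List

open List in
noncomputable def shortRunWords (k ℓ : ℕ) (a b : Bool) : Finset (List Bool) :=
  (finite_length_eq Bool ℓ).toFinset.filter fun w =>
    w.head? = some a ∧ w.getLast? = some b ∧ ∀ c, ¬ replicate k c <:+: w

section ShortRunWords

variable {k ℓ : ℕ} {a b : Bool} {w : List Bool}

theorem mem_shortRunWords :
    w ∈ shortRunWords k ℓ a b ↔
      w.length = ℓ ∧ w.head? = some a ∧ w.getLast? = some b ∧
        ∀ c, ¬ List.replicate k c <:+: w := by
  simp [shortRunWords]

theorem length_pos_of_mem_shortRunWords (hw : w ∈ shortRunWords k ℓ a b) : 0 < ℓ := by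
  obtain ⟨rfl, hhead, -⟩ := mem_shortRunWords.1 hw
  exact List.length_pos_iff.2 (by rintro rfl; simp at hhead)

theorem shortRunWords_zero : shortRunWords k 0 a b = ∅ :=
  eq_empty_of_forall_notMem fun _ hw => (length_pos_of_mem_shortRunWords hw).false

theorem map_not_mem_shortRunWords (hw : w ∈ shortRunWords k ℓ a b) :
    w.map not ∈ shortRunWords k ℓ (!a) (!b) := by
  obtain ⟨hlen, hhead, hlast, hrun⟩ := mem_shortRunWords.1 hw
  refine mem_shortRunWords.2 ⟨by simp [hlen], by simp [hhead], by simp [hlast], fun c hc => ?_⟩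
  exact hrun (!c) (by simpa [Function.comp_def] using hc.map not)

theorem card_shortRunWords_not : #(shortRunWords k ℓ (!a) (!b)) = #(shortRunWords k ℓ a b) := by
  refine card_nbij' (List.map not) (List.map not) (fun w hw => ?_) (fun w hw => ?_)
    (fun w _ => by simp [Function.comp_def]) (fun w _ => by simp [Function.comp_def])
  · simpa using map_not_mem_shortRunWords (Finset.mem_coe.1 hw)
  · exact map_not_mem_shortRunWords (Finset.mem_coe.1 hw)

theorem replicate_append_mem_shortRunWords {t x : ℕ} {u : List Bool} (ht : 0 < t) (htk : t < k)
    (hu : u ∈ shortRunWords k x (!a) b) :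
    List.replicate t a ++ u ∈ shortRunWords k (t + x) a b := by
  obtain ⟨hlen, hhead, hlast, hrun⟩ := mem_shortRunWords.1 hu
  have hne : u ≠ [] := by rintro rfl; simp at hhead
  have hhead' : u.head? ≠ some a := by simp [hhead]
  obtain ⟨t, rfl⟩ := Nat.exists_eq_add_one_of_ne_zero ht.ne'
  refine mem_shortRunWords.2 ⟨by simp [hlen], by simp [List.replicate_succ], ?_, fun c =>
    List.not_replicate_infix_replicate_append htk hhead' (hrun c)⟩
  rwa [List.getLast?_append_of_ne_nil _ hne]

theorem replicate_mem_shortRunWords (hℓ : 0 < ℓ) (hℓk : ℓ < k) :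
    List.replicate ℓ a ∈ shortRunWords k ℓ a a := by
  obtain ⟨j, rfl⟩ := Nat.exists_eq_add_one_of_ne_zero hℓ.ne'
  refine mem_shortRunWords.2 ⟨by simp, by simp [List.replicate_succ],
    by simp [List.replicate_succ'], fun c hc => ?_⟩
  have := hc.length_le
  simp only [List.length_replicate] at this
  omega

theorem exists_of_mem_shortRunWords (hw : w ∈ shortRunWords k ℓ a b) :
    (∃ x ∈ Ico (ℓ - (k - 1)) ℓ, ∃ u ∈ shortRunWords k x (!a) b,
        List.replicate (ℓ - x) a ++ u = w) ∨
      a = b ∧ 0 < ℓ ∧ ℓ < k ∧ w = List.replicate ℓ a := by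
  obtain ⟨hlen, hhead, hlast, hrun⟩ := mem_shortRunWords.1 hw
  obtain ⟨t, u, rfl, hu⟩ := List.exists_eq_replicate_append_head?_ne a w
  have ht : 0 < t := Nat.pos_of_ne_zero fun h => by
    simp only [h, List.replicate_zero, List.nil_append] at hhead hu
    exact hu hhead
  have htk : t < k := by
    by_contra! h
    refine hrun a ((List.prefix_replicate_iff.2 ⟨by simpa using h, by simp⟩).trans
      (List.prefix_append _ _)).isInfix
  rcases eq_or_ne u [] with rfl | hne
  · simp only [List.append_nil, List.length_replicate] at hlen hlast ⊢
    subst hlen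
    refine Or.inr ⟨?_, ht, htk, rfl⟩
    obtain ⟨j, rfl⟩ := Nat.exists_eq_add_one_of_ne_zero ht.ne'
    simpa [List.replicate_succ'] using hlast
  · refine Or.inl ⟨u.length, ?_, u,
      mem_shortRunWords.2 ⟨rfl, ?_, ?_, fun c hc => hrun c ?_⟩, ?_⟩
    · simp only [← hlen, List.length_append, List.length_replicate, mem_Ico]
      have := List.length_pos_iff.2 hne
      omega
    · obtain ⟨y, u, rfl⟩ := List.exists_cons_of_ne_nil hne
      cases a <;> cases y <;> simp_all
    · rwa [List.getLast?_append_of_ne_nil _ hne] at hlast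
    · exact hc.trans (List.suffix_append _ _).isInfix
    · simp [← hlen]

variable (k ℓ a b) in
theorem shortRunWords_eq_union :
    shortRunWords k ℓ a b =
      (Ico (ℓ - (k - 1)) ℓ).biUnion
          (fun x => (shortRunWords k x (!a) b).image (List.replicate (ℓ - x) a ++ ·)) ∪
        if a = b ∧ 0 < ℓ ∧ ℓ < k then {List.replicate ℓ a} else ∅ := by
  ext w
  simp only [mem_union, mem_biUnion, mem_image]
  constructor
  · intro hw
    rcases exists_of_mem_shortRunWords hw with h | ⟨rfl, hℓ, hℓk, rfl⟩
    · exact Or.inl h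
    · simp [hℓ, hℓk]
  · rintro (⟨x, hx, u, hu, rfl⟩ | hw)
    · rw [mem_Ico] at hx
      simpa [show ℓ - x + x = ℓ by omega] using
        replicate_append_mem_shortRunWords (t := ℓ - x) (by omega) (by omega) hu
    · split_ifs at hw with h
      · obtain ⟨rfl, hℓ, hℓk⟩ := h
        exact (mem_singleton.1 hw) ▸ replicate_mem_shortRunWords hℓ hℓk
      · simp at hw

variable (k ℓ a b) in
theorem card_shortRunWords :
    #(shortRunWords k ℓ a b) =
      ∑ x ∈ Ico (ℓ - (k - 1)) ℓ, #(shortRunWords k x (!a) b) +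
        if a = b ∧ 0 < ℓ ∧ ℓ < k then 1 else 0 := by
  have head_ne {x} {u : List Bool} (hu : u ∈ shortRunWords k x (!a) b) : u.head? ≠ some a := by
    simp [(mem_shortRunWords.1 hu).2.1]
  rw [shortRunWords_eq_union, card_union_of_disjoint, card_biUnion]
  · congr 1
    · exact sum_congr rfl fun x _ => card_image_of_injective _ (List.append_right_injective _)
    · split_ifs <;> rfl
  · intro x hx y hy hxy
    simp only [Function.onFun, disjoint_left, mem_image, not_exists, not_and]
    rintro _ ⟨u, hu, rfl⟩ v hv h
    have := (List.replicate_append_inj (head_ne hv) (head_ne hu) h).1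
    simp only [coe_Ico, Set.mem_Ico] at hx hy
    omega
  · split_ifs
    · simp only [disjoint_singleton_right, mem_biUnion, mem_image, not_exists, not_and]
      intro x _ u hu h
      obtain ⟨-, rfl⟩ :=
        List.replicate_append_inj (head_ne hu) (by simp) (h.trans (List.append_nil _).symm)
      simp [mem_shortRunWords] at hu
    · exact disjoint_empty_right _

end ShortRunWords

theorem eq_of_sum_Ico_rec {u v : ℕ → ℤ} {m : ℕ} {c : ℤ} (h0 : u 0 = v 0)
    (hu : ∀ ℓ, 0 < ℓ → u ℓ = c * ∑ x ∈ Ico (ℓ - m) ℓ, u x)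
    (hv : ∀ ℓ, 0 < ℓ → v ℓ = c * ∑ x ∈ Ico (ℓ - m) ℓ, v x) (ℓ : ℕ) :
    u ℓ = v ℓ := by
  induction ℓ using Nat.strong_induction_on with
  | _ ℓ ih =>
    rcases Nat.eq_zero_or_pos ℓ with rfl | hℓ
    · exact h0
    rw [hu ℓ hℓ, hv ℓ hℓ]
    exact congrArg _ (sum_congr rfl fun x hx => ih x (mem_Ico.1 hx).2)

theorem f_of_lt {k ℓ : ℕ} (h : ℓ < k) : f k ℓ = 2 ^ ℓ := by
  rw [f, dif_pos h]

theorem f_of_le {k ℓ : ℕ} (h : k ≤ ℓ) :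
    f k ℓ = ∑ i ∈ range k, f k (ℓ - (i + 1)) := by
  rw [f, dif_neg (not_lt.2 h), sum_attach (range k) fun i => f k (ℓ - (i + 1))]

/-- At `x = 0` the summand is `f m (0 - 1) = f m 0 = 1`, the natural value of `f_{-1}`. -/
theorem f_pred_eq_sum_Ico {m ℓ : ℕ} (hm : 0 < m) (hℓ : 0 < ℓ) :
    f m (ℓ - 1) = ∑ x ∈ Ico (ℓ - m) ℓ, f m (x - 1) := by
  obtain ⟨j, rfl⟩ := Nat.exists_eq_add_one_of_ne_zero hℓ.ne'
  rcases lt_or_ge j m with hj | hj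
  · rw [Nat.sub_eq_zero_of_le hj, ← range_eq_Ico, sum_range_succ', add_tsub_cancel_right,
      f_of_lt hj, zero_tsub, f_of_lt hm, pow_zero]
    simp only [add_tsub_cancel_right]
    rw [sum_congr rfl fun i hi => f_of_lt ((mem_range.1 hi).trans hj)]
    rw [Nat.geomSum_eq le_rfl, Nat.div_one, Nat.sub_add_cancel Nat.one_le_two_pow]
  · rw [add_tsub_cancel_right, f_of_le hj, sum_Ico_eq_sum_range, ← sum_range_reflect]
    refine sum_congr (by congr 1; omega) fun i hi => ?_
    rw [mem_range] at hi
    congr 1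
    omega

theorem d_zero (k : ℕ) : d k 0 = 1 := by simp [d]

theorem d_succ {k : ℕ} (hk : 2 ≤ k) (n : ℕ) :
    d k (n + 1) = (if k ∣ n + 1 then 1 else 0) - if k ∣ n then 1 else 0 := by
  have hmod : (n + 1) % k = if k ≤ n % k + 1 then n % k + 1 - k else n % k + 1 := by
    rw [Nat.add_mod_eq_ite, Nat.one_mod_eq_one.2 (by omega)]
  have := Nat.mod_lt n (by omega : 0 < k)
  simp only [d, Nat.dvd_iff_mod_eq_zero]
  split_ifs at hmod ⊢ <;> omega

theorem sum_range_succ_d {k : ℕ} (hk : 2 ≤ k) (n : ℕ) :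
    ∑ j ∈ range (n + 1), d k j = if k ∣ n then 1 else 0 := by
  induction n with
  | zero => simp [d_zero]
  | succ n ih => rw [sum_range_succ, ih, d_succ hk]; ring

theorem d_eq_neg_sum_Ico {k ℓ : ℕ} (hk : 2 ≤ k) (hℓ : 0 < ℓ) :
    d k ℓ = -∑ x ∈ Ico (ℓ - (k - 1)) ℓ, d k x := by
  suffices ∑ x ∈ Ico (ℓ - (k - 1)) (ℓ + 1), d k x = 0 by
    rw [sum_Ico_succ_top (by omega)] at this
    linarith
  rw [sum_Ico_eq_sub _ (by omega), sum_range_succ_d hk]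
  rcases lt_or_ge ℓ k with hℓk | hℓk
  · rw [Nat.sub_eq_zero_of_le (by omega), if_neg (Nat.not_dvd_of_pos_of_lt hℓ hℓk)]
    simp
  · have hdvd : k ∣ ℓ - k ↔ k ∣ ℓ := by
      rw [Nat.dvd_sub_self_right]
      exact or_iff_left_of_imp fun h => le_antisymm h hℓk ▸ dvd_rfl
    rw [show ℓ - (k - 1) = ℓ - k + 1 by omega, sum_range_succ_d hk, if_congr hdvd rfl rfl,
      sub_self]

section Counting

variable {k : ℕ}

variable (k) in
theorem Rset_eq_shortRunWords (ℓ : ℕ) : Rset k ℓ = shortRunWords k ℓ false true := by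
  ext w
  simp [Rset, mem_shortRunWords, Bool.forall_bool]

variable (k) in
theorem r_eq_card (ℓ : ℕ) :
    r k ℓ = #(shortRunWords k ℓ false true) + if ℓ = 0 then 1 else 0 := by
  unfold r
  split_ifs with h
  · simp [h, shortRunWords_zero]
  · rw [Rset_eq_shortRunWords, Set.ncard_coe_finset, add_zero]

theorem r_eq_sum {ℓ : ℕ} (hℓ : 0 < ℓ) :
    (r k ℓ : ℤ) =
      ∑ x ∈ Ico (ℓ - (k - 1)) ℓ, (#(shortRunWords k x false false) : ℤ) := by
  rw [r_eq_card, card_shortRunWords, if_neg (by simp), if_neg hℓ.ne']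
  push_cast
  simp only [add_zero]
  exact sum_congr rfl fun x _ => by
    exact_mod_cast card_shortRunWords_not (a := false) (b := false)

theorem card_shortRunWords_false_false_eq_sum {ℓ : ℕ} (hℓ : 0 < ℓ) :
    (#(shortRunWords k ℓ false false) : ℤ) =
      ∑ x ∈ Ico (ℓ - (k - 1)) ℓ, (r k x : ℤ) := by
  have hzero : (false = false ∧ 0 < ℓ ∧ ℓ < k) ↔ 0 ∈ Ico (ℓ - (k - 1)) ℓ := by
    simp only [mem_Ico, true_and]
    omega
  rw [card_shortRunWords, if_congr hzero rfl rfl]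
  simp only [r_eq_card, Nat.cast_add, Nat.cast_ite, Nat.cast_one, Nat.cast_zero, sum_add_distrib,
    sum_ite_eq']
  push_cast
  congr 1
  exact sum_congr rfl fun x _ => by
    exact_mod_cast card_shortRunWords_not (a := false) (b := true)

theorem r_add_card_shortRunWords (hk : 2 ≤ k) (ℓ : ℕ) :
    (r k ℓ : ℤ) + #(shortRunWords k ℓ false false) = f (k - 1) (ℓ - 1) :=
  eq_of_sum_Ico_rec (m := k - 1) (c := 1)
    (u := fun ℓ => (r k ℓ : ℤ) + #(shortRunWords k ℓ false false))
    (v := fun ℓ => (f (k - 1) (ℓ - 1) : ℤ))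
    (by simp [r, shortRunWords_zero, f_of_lt (show 0 < k - 1 by omega)])
    (fun ℓ hℓ => by
      rw [one_mul, sum_add_distrib, ← r_eq_sum hℓ,
        ← card_shortRunWords_false_false_eq_sum hℓ, add_comm])
    (fun ℓ hℓ => by rw [one_mul, f_pred_eq_sum_Ico (by omega) hℓ]; push_cast; rfl) ℓ

theorem r_sub_card_shortRunWords (hk : 2 ≤ k) (ℓ : ℕ) :
    (r k ℓ : ℤ) - #(shortRunWords k ℓ false false) = d k ℓ :=
  eq_of_sum_Ico_rec (m := k - 1) (c := -1)
    (u := fun ℓ => (r k ℓ : ℤ) - #(shortRunWords k ℓ false false)) (v := d k)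
    (by simp [r, shortRunWords_zero, d_zero])
    (fun ℓ hℓ => by
      rw [sum_sub_distrib, ← r_eq_sum hℓ, ← card_shortRunWords_false_false_eq_sum hℓ]
      ring)
    (fun ℓ hℓ => by rw [d_eq_neg_sum_Ico hk hℓ, neg_one_mul]) ℓ

theorem two_mul_r (hk : 2 ≤ k) (ℓ : ℕ) :
    2 * (r k ℓ : ℤ) = f (k - 1) (ℓ - 1) + d k ℓ := by
  linarith [r_add_card_shortRunWords hk ℓ, r_sub_card_shortRunWords hk ℓ]

theorem two_mul_sum_Icc_r (hk : 2 ≤ k) {m : ℕ} (hm : 0 < m) :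
    2 * ∑ ℓ ∈ Icc 2 m, (r k ℓ : ℤ) =
      S (k - 1) (m - 1) - 1 + if k ∣ m then 1 else 0 := by
  have hsplit : ∑ ℓ ∈ range (m + 1), 2 * (r k ℓ : ℤ) =
      2 * r k 0 + (2 * r k 1 + ∑ ℓ ∈ Icc 2 m, 2 * (r k ℓ : ℤ)) := by
    rw [range_eq_Ico, sum_eq_sum_Ico_succ_bot (by omega), sum_eq_sum_Ico_succ_bot (by omega),
      Ico_add_one_right_eq_Icc]
  have hf : ∑ ℓ ∈ range (m + 1), (f (k - 1) (ℓ - 1) : ℤ) = 1 + S (k - 1) (m - 1) := by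
    rw [sum_range_succ', S, Nat.sub_add_cancel hm, zero_tsub, f_of_lt (show 0 < k - 1 by omega)]
    push_cast
    ring
  have hrange : ∑ ℓ ∈ range (m + 1), 2 * (r k ℓ : ℤ) =
      1 + S (k - 1) (m - 1) + if k ∣ m then 1 else 0 := by
    rw [sum_congr rfl fun ℓ _ => two_mul_r hk ℓ, sum_add_distrib, hf, sum_range_succ_d hk]
  have h0 : r k 0 = 1 := by simp [r]
  have h1 : r k 1 = 0 := by
    have := two_mul_r hk 1
    rw [f_of_lt (show 0 < k - 1 by omega), d_succ hk, if_pos (dvd_zero k),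
      if_neg (show ¬ k ∣ 0 + 1 from Nat.not_dvd_of_pos_of_lt (by omega) (by omega))] at this
    simp only [pow_zero, Nat.cast_one] at this
    omega
  rw [mul_sum]
  push_cast [h0, h1] at hsplit
  linarith

end Counting

def frame (k : ℕ) (w : List Bool) : List Bool :=
  List.replicate k true ++ w ++ List.replicate k false

theorem frame_injective (k : ℕ) : Function.Injective (frame k) := fun _ _ h =>
  List.append_cancel_left (List.append_cancel_right h)

theorem mem_Vnk_iff {k ℓ : ℕ} {v : List Bool} :
    v ∈ Vnk (2 * k + ℓ) k ↔ ∃ w ∈ Rset k ℓ, frame k w = v := by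
  simp only [Vnk, Set.mem_ofPred_eq, add_tsub_cancel_left]
  constructor
  · rintro ⟨hlen, hpre, hsuf, hhead, hlast, hfalse, htrue⟩
    have hlen' : ((v.drop k).take ℓ).length = ℓ := by
      simp only [List.length_take, List.length_drop, hlen]
      omega
    refine ⟨(v.drop k).take ℓ, ⟨hlen', hhead, hlast, hfalse, htrue⟩, ?_⟩
    rw [List.prefix_iff_eq_take, List.length_replicate] at hpre
    rw [List.suffix_iff_eq_drop, List.length_replicate, hlen,
      show 2 * k + ℓ - k = k + ℓ by omega, ← List.drop_drop] at hsuf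
    rw [frame, hpre, hsuf, List.append_assoc, List.take_append_drop, List.take_append_drop]
  · rintro ⟨w, ⟨hlen, hhead, hlast, hfalse, htrue⟩, rfl⟩
    have hmid : ((frame k w).drop k).take ℓ = w := by
      simp [frame, hlen]
    have hlen' : (frame k w).length = 2 * k + ℓ := by
      simp only [frame, List.length_append, List.length_replicate, hlen]
      omega
    refine ⟨hlen', (List.prefix_append _ _).trans (List.prefix_append _ _),
      List.suffix_append _ _, ?_⟩
    rw [hmid]
    exact ⟨hhead, hlast, hfalse, htrue⟩

theorem VkLe_eq_image (k n : ℕ) :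
    VkLe k n = frame k '' ⋃ ℓ ∈ Icc 2 (n - 2 * k), Rset k ℓ := by
  ext v
  simp only [VkLe, VkSet, Set.mem_ofPred_eq, Set.mem_iUnion, Set.mem_image, mem_Icc]
  constructor
  · rintro ⟨⟨i, hi, hv⟩, hlen⟩
    obtain ⟨ℓ, rfl⟩ : ∃ ℓ, i = 2 * k + ℓ := ⟨i - 2 * k, by omega⟩
    have hvlen := hv.1
    obtain ⟨w, hw, rfl⟩ := mem_Vnk_iff.1 hv
    exact ⟨w, ⟨ℓ, ⟨by omega, by omega⟩, hw⟩, rfl⟩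
  · rintro ⟨w, ⟨ℓ, ⟨hℓ2, hℓn⟩, hw⟩, rfl⟩
    have hv := mem_Vnk_iff.2 ⟨w, hw, rfl⟩
    exact ⟨⟨2 * k + ℓ, by omega, hv⟩, by rw [hv.1]; omega⟩

theorem ncard_VkLe (k n : ℕ) : (VkLe k n).ncard = ∑ ℓ ∈ Icc 2 (n - 2 * k), r k ℓ := by
  have hunion : ⋃ ℓ ∈ Icc 2 (n - 2 * k), Rset k ℓ =
      ↑((Icc 2 (n - 2 * k)).biUnion (shortRunWords k · false true)) := by
    simp [Rset_eq_shortRunWords]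
  rw [VkLe_eq_image, Set.ncard_image_of_injective _ (frame_injective k), hunion,
    Set.ncard_coe_finset, card_biUnion]
  · refine sum_congr rfl fun ℓ hℓ => ?_
    rw [r_eq_card, if_neg (by simp only [mem_Icc] at hℓ; omega), add_zero]
  · intro i _ j _ hij
    exact disjoint_left.2 fun w hi hj =>
      hij ((mem_shortRunWords.1 hi).1.symm.trans (mem_shortRunWords.1 hj).1)

/-- For any `k ≥ 3` and `n ≥ 2k+2`,
`|𝒱^(k)(n)| = (S^(k-1)(n - 2k - 1) - 1 + δ_n^(k)) / 2`. -/
theorem stmt_10 (k n : ℕ) (hk : 3 ≤ k) (hn : 2 * k + 2 ≤ n) :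
    ((VkLe k n).ncard : ℚ) =
      ((S (k - 1) (n - 2 * k - 1) : ℚ) - 1 + (if k ∣ n then 1 else 0)) / 2 := by
  have hdvd : k ∣ n ↔ k ∣ n - 2 * k := by
    conv_lhs => rw [← Nat.sub_add_cancel (by omega : 2 * k ≤ n)]
    exact Nat.dvd_add_left (dvd_mul_left k 2)
  have key := congrArg (Int.cast : ℤ → ℚ)
    (two_mul_sum_Icc_r (k := k) (m := n - 2 * k) (by omega) (by omega))
  rw [ncard_VkLe, if_congr hdvd rfl rfl, eq_div_iff two_ne_zero]
  push_cast at key ⊢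
  linarith
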